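/- Let P = (P_1,…,P_{t_1}) and Q = (Q_1,…,Q_{t_2}) with t_1, t_2 ≥ 1, m_1 = max_i deg P_i, m_2 = max_i deg Q_i, m_1 ≥ m_2, t_1 + t_2 ≤ m_1 + 1. If m_2 = m_1 − t_1, or if m_2 < m_1 − t_1 and t_2 = 1, then dp(P_1,…,P_{t_1},Q_1,…,Q_{t_2}) = pcdp(P) · dp(Q). -/

import Mathlib

/-!
Since `deg Q_i ≤ m₁ - t₁`, the rows of `Q` vanish in the first `t₁` columns of `cm(P, Q)`, so
each minor `[M_1 ⋯ M_{t-1} M_{m₁+1-j}]` is block upper triangular: it is the leading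
`t₁ × t₁` minor of `cm(P)`, which is `pcdp(P)`, times the corresponding minor of the `Q`-rows
restricted to the last `m₁ + 1 - t₁` columns. Those are the coefficients of the determinant
polynomial of `Q` computed with `m₁ + 1 - t₁` columns. This is `dp(Q)` when
`m₂ + 1 = m₁ + 1 - t₁`; for a single polynomial `g` it is `g` itself as soon as there are
more than `deg g` columns.
-/

open Polynomial

noncomputable section

variable {R : Type*} [CommRing R]

/-- Column selection for the determinant polynomial: the first `t - 1` columns of a
`t × q` matrix, and then (for the `j`-th coefficient) the column `q - j` (1-indexed),
i.e. column `q - 1 - j` (0-indexed). -/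
def colSel (t q j : ℕ) (k : Fin t) : ℕ :=
  if (k : ℕ) + 1 < t then (k : ℕ) else q - 1 - j

/-- Determinant polynomial of the coefficient matrix of the list of polynomials `L`,
where the coefficient matrix has `q` columns: its `(i,k)` entry (0-indexed) is the
coefficient of `x^(q-1-k)` in `L.get i`.  So
`dpListQ L q = ∑_{j=0}^{q - t} det [M_1 ⋯ M_{t-1} M_{q-j}] • x^j` with `t = L.length`. -/
noncomputable def dpListQ (L : List (Polynomial R)) (q : ℕ) : Polynomial R :=
  ∑ j ∈ Finset.range (q + 1 - L.length),
    Polynomial.C (Matrix.det (Matrix.of fun i k : Fin L.length =>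
      (L.get i).coeff (q - 1 - colSel L.length q j k))) * Polynomial.X ^ j

/-- The maximum of the degrees of the polynomials in `L`. -/
def maxDeg (L : List (Polynomial R)) : ℕ := (L.map Polynomial.natDegree).foldr max 0

/-- `dp(P) = dp(cm(P))`: the coefficient matrix `cm(P)` has `m + 1` columns where
`m` is the maximal degree. -/
noncomputable def dpList (L : List (Polynomial R)) : Polynomial R :=
  dpListQ L (maxDeg L + 1)

/-- `pcdp(P)`: the coefficient of `x^(q - p)` in `dp(P)` (`p` rows, `q` columns). -/
noncomputable def pcdpList (L : List (Polynomial R)) : R :=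
  (dpList L).coeff (maxDeg L + 1 - L.length)

/-- The list `x^(m-1) * g, x^(m-2) * g, …, x^0 * g`. -/
noncomputable def shifts (g : Polynomial R) (m : ℕ) : List (Polynomial R) :=
  (List.range m).reverse.map fun s => Polynomial.X ^ s * g

/-- The coefficient ring `ℤ[b, b*]`: polynomials over `ℤ` in independent indeterminates
indexed by a tag (`false` for the `b`'s, `true` for the `b*`'s) and a pair of indices. -/
abbrev Rb : Type := MvPolynomial (Bool × ℕ × ℕ) ℤ

/-- The generic polynomials `P_i = ∑_{j=0}^{p_i} b_{i j} x^j` with independent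
indeterminate coefficients. -/
noncomputable def genPoly (b : Bool) (t : ℕ) (deg : Fin t → ℕ) : List (Polynomial Rb) :=
  List.ofFn fun i : Fin t =>
    ∑ j ∈ Finset.range (deg i + 1),
      Polynomial.C (MvPolynomial.X (b, (i : ℕ), j)) * Polynomial.X ^ j

lemma maxDeg_append (A B : List (Polynomial R)) :
    maxDeg (A ++ B) = max (maxDeg A) (maxDeg B) := by
  unfold maxDeg
  induction A with
  | nil => simp
  | cons a as ih =>
    simp only [List.cons_append, List.map_cons, List.foldr_cons] at ih ⊢
    rw [ih, max_assoc]

lemma natDegree_le_maxDeg {L : List (Polynomial R)} {f : Polynomial R} (hf : f ∈ L) :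
    f.natDegree ≤ maxDeg L := by
  unfold maxDeg
  induction L with
  | nil => simp at hf
  | cons a as ih =>
    rcases List.mem_cons.1 hf with rfl | h
    · simp
    · simpa using Or.inr (ih h)

lemma maxDeg_singleton (g : Polynomial R) : maxDeg [g] = g.natDegree := by
  simp [maxDeg]

lemma coeff_sum_range_C_mul_X_pow (f : ℕ → R) (N n : ℕ) :
    (∑ j ∈ Finset.range N, C (f j) * X ^ j).coeff n = if n < N then f n else 0 := by
  simp [finsetSum_coeff]

lemma det_of_get_append {α : Type*} (P Q : List α) (F : α → ℕ → R)
    (hQ : ∀ b ∈ Q, ∀ k < P.length, F b k = 0) :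
    (Matrix.of fun i k : Fin (P ++ Q).length => F ((P ++ Q).get i) k).det
      = (Matrix.of fun i k : Fin P.length => F (P.get i) k).det
        * (Matrix.of fun i k : Fin Q.length => F (Q.get i) (P.length + k)).det := by
  let E : Fin P.length ⊕ Fin Q.length ≃ Fin (P ++ Q).length :=
    finSumFinEquiv.trans (finCongr List.length_append.symm)
  rw [← Matrix.det_submatrix_equiv_self E, ← Matrix.det_fromBlocks_zero₂₁ _
    (Matrix.of fun (i : Fin P.length) (k : Fin Q.length) => F (P.get i) (P.length + k))]
  congr 1
  ext (a | b) (c | d) <;> simp [E, List.getElem_append_left, List.getElem_append_right, hQ]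

/-- The minor formed by the first `L.length` columns of the `L.length × q` coefficient matrix. -/
def leadingMinor (L : List (Polynomial R)) (q : ℕ) : R :=
  (Matrix.of fun i k : Fin L.length => (L.get i).coeff (q - 1 - k)).det

lemma coeff_dpListQ_sub_length {L : List (Polynomial R)} {q : ℕ} (h : L.length ≤ q) :
    (dpListQ L q).coeff (q - L.length) = leadingMinor L q := by
  rw [dpListQ, coeff_sum_range_C_mul_X_pow, if_pos (by omega), leadingMinor]
  congr 1
  ext i k
  have := k.isLt
  simp only [Matrix.of_apply, colSel]
  congr 1
  split_ifs <;> omega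

lemma dpListQ_append {P Q : List (Polynomial R)} {q : ℕ} (hQ : Q ≠ [])
    (hdeg : ∀ g ∈ Q, g.natDegree + P.length < q) :
    dpListQ (P ++ Q) q = C (leadingMinor P q) * dpListQ Q (q - P.length) := by
  have hQlen : 0 < Q.length := List.length_pos_iff.2 hQ
  rw [dpListQ, dpListQ, Finset.mul_sum]
  refine Finset.sum_congr (congrArg Finset.range (by simp only [List.length_append]; omega))
    fun j hj => ?_
  rw [Finset.mem_range] at hj
  rw [← mul_assoc, ← C_mul]
  congr 2
  refine (det_of_get_append P Q (fun f k => f.coeff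
    (q - 1 - if k + 1 < (P ++ Q).length then k else q - 1 - j)) ?_).trans ?_
  · intro g hg k hk
    have := hdeg g hg
    rw [if_pos (by simp only [List.length_append]; omega)]
    exact coeff_eq_zero_of_natDegree_lt (by omega)
  · congr 2 <;> ext i k <;> have := k.isLt <;>
      simp only [Matrix.of_apply, colSel, List.length_append] <;> split_ifs <;> congr 1 <;> omega

lemma dpListQ_singleton {g : Polynomial R} {q : ℕ} (hg : g.natDegree < q) :
    dpListQ [g] q = g := by
  conv_rhs => rw [g.as_sum_range_C_mul_X_pow' hg]
  rw [dpListQ]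
  refine Finset.sum_congr (congrArg Finset.range (by simp)) fun j hj => ?_
  rw [Finset.mem_range] at hj
  have hidx : q - 1 - (q - 1 - j) = j := by omega
  simp [Matrix.det_unique, colSel, hidx]

lemma dpList_singleton (g : Polynomial R) : dpList [g] = g :=
  dpListQ_singleton (by rw [maxDeg_singleton]; omega)

theorem dpList_append {P Q : List (Polynomial R)} (hQ : Q ≠ [])
    (hcase : maxDeg Q + P.length = maxDeg P
      ∨ (maxDeg Q + P.length < maxDeg P ∧ Q.length = 1)) :
    dpList (P ++ Q) = C (pcdpList P) * dpList Q := by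
  have hle : maxDeg Q + P.length ≤ maxDeg P := by rcases hcase with h | h <;> omega
  have hdeg : ∀ g ∈ Q, g.natDegree + P.length < maxDeg P + 1 := fun g hg => by
    have := natDegree_le_maxDeg hg
    omega
  have hpcdp : pcdpList P = leadingMinor P (maxDeg P + 1) := by
    rw [pcdpList, dpList, coeff_dpListQ_sub_length (by omega)]
  have hQpart : dpListQ Q (maxDeg P + 1 - P.length) = dpList Q := by
    rcases hcase with h | ⟨h, hlen⟩
    · rw [dpList, ← h]
      congr 1
      omega
    · obtain ⟨g, rfl⟩ := List.length_eq_one_iff.1 hlen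
      rw [maxDeg_singleton] at h
      rw [dpList_singleton, dpListQ_singleton (by omega)]
  rw [dpList, maxDeg_append, max_eq_left (by omega), dpListQ_append hQ hdeg, hpcdp, hQpart]

theorem dp_append_case_factor_general (t1 t2 : ℕ) (ht2 : 1 ≤ t2)
    (p : Fin t1 → ℕ) (q : Fin t2 → ℕ)
    (hcase : maxDeg (genPoly true t2 q) + t1 = maxDeg (genPoly false t1 p)
      ∨ (maxDeg (genPoly true t2 q) + t1 < maxDeg (genPoly false t1 p) ∧ t2 = 1)) :
    dpList (genPoly false t1 p ++ genPoly true t2 q)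
      = Polynomial.C (pcdpList (genPoly false t1 p)) * dpList (genPoly true t2 q) := by
  have hP : (genPoly false t1 p).length = t1 := List.length_ofFn
  have hQ : (genPoly true t2 q).length = t2 := List.length_ofFn
  refine dpList_append (List.ne_nil_of_length_pos (by omega)) ?_
  rwa [hP, hQ]

/-- Case (2) of Lemma on determinant polynomials: if `m₂ = m₁ - t₁`, or if
`m₂ < m₁ - t₁` and `t₂ = 1`, then `dp(P, Q) = pcdp(P) ⬝ dp(Q)`. -/
theorem dp_append_case_factor (t1 t2 : ℕ) (ht1 : 1 ≤ t1) (ht2 : 1 ≤ t2)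
    (p : Fin t1 → ℕ) (q : Fin t2 → ℕ)
    (hm : maxDeg (genPoly true t2 q) ≤ maxDeg (genPoly false t1 p))
    (ht : t1 + t2 ≤ maxDeg (genPoly false t1 p) + 1)
    (hcase : maxDeg (genPoly true t2 q) + t1 = maxDeg (genPoly false t1 p)
      ∨ (maxDeg (genPoly true t2 q) + t1 < maxDeg (genPoly false t1 p) ∧ t2 = 1)) :
    dpList (genPoly false t1 p ++ genPoly true t2 q)
      = Polynomial.C (pcdpList (genPoly false t1 p)) * dpList (genPoly true t2 q) :=
  dp_append_case_factor_general t1 t2 ht2 p q hcase
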